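/- Let n ∈ ℕ, N = 2^n, let G be the n-fold Kronecker power over 𝔽₂ of the kernel [[1,0],[1,1]], and let ℓ ≥ 2. Suppose i, j, k ∈ {0,…,N−1} satisfy popcount(i) = popcount(j) = ℓ, popcount(k) = 2, and i AND j = i AND k = j AND k = 0. Let C̄ ⊆ 𝔽₂^N be the 𝔽₂-linear span of the rows {g_t : t ∈ {0,…,N−1}, popcount(t) ≥ ℓ+1} together with the vector g_i + g_j + g_k. Then the minimum Hamming weight over nonzero elements of C̄ equals 2^{ℓ+1}: every nonzero c ∈ C̄ has i₁(c) ≥ 2^{ℓ+1}, and some c ∈ C̄ has i₁(c) = 2^{ℓ+1}. -/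

import Mathlib

open Finset

/-- The polar kernel `G₂ = [[1,0],[1,1]]` over `𝔽₂`. -/
def polarKernel : Matrix (Fin 2) (Fin 2) (ZMod 2) := !![1, 0; 1, 1]

/-- The `n`-fold Kronecker power of the polar kernel, an `N × N` matrix over `𝔽₂`
with `N = 2 ^ n`, rows and columns indexed by `0, …, N-1`. -/
def polarG : (n : ℕ) → Matrix (Fin (2 ^ n)) (Fin (2 ^ n)) (ZMod 2)
  | 0 => 1
  | n + 1 =>
    Matrix.reindex (finCongr (by ring)) (finCongr (by ring))
      (Matrix.reindex finProdFinEquiv finProdFinEquiv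
        (Matrix.kroneckerMap (· * ·) polarKernel (polarG n)))

/-- Row `g_t` of the polar matrix, as a vector in `𝔽₂^N`. -/
def row (n : ℕ) (t : Fin (2 ^ n)) : Fin (2 ^ n) → ZMod 2 := fun c => polarG n t c

/-- Hamming weight `i₁(v)`: the number of nonzero coordinates of `v`. -/
def hammingWeight {N : ℕ} (v : Fin N → ZMod 2) : ℕ :=
  (Finset.univ.filter fun c => v c ≠ 0).card

/-- `popcount j`: the number of ones in the binary representation of `j`. -/
def popcount (j : ℕ) : ℕ := (Nat.bits j).count true


/-!
Index the coordinates of `𝔽₂^N` by bit vectors `c ∈ {0,1}^n`. Then `g_t` is the indicator of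
`{c | c ≤ t}`, and the rows of popcount at least `p` span the Reed–Muller code `RM(n - p, n)`,
whose minimum distance `2^p` follows from the `(u | u + v)` recursion.

Split `f = g_i + g_j + g_k + q`, with `q` in that code, into its four faces along the two bits
of `k`. On each face `g_k` restricts to the indicator of one point, which is not in
`RM(n - 3, n - 2)`; hence the three faces on which `g_i` and `g_j` vanish are nonzero. Triangle
inequalities between the faces, the minimum distance of the smaller Reed–Muller codes, and the
bound `wt(g_i + g_j + q) ≥ 2^(ℓ+1) - 2` for disjoint `i, j` of popcount `ℓ` then give
`wt f ≥ 2^(ℓ+1)`. That bound is proved by the same four-face argument, by induction on `ℓ`.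
-/

section Hamming

variable {ι : Type*} [Fintype ι]

lemma hammingNorm_add_le {β : Type*} [AddGroup β] [DecidableEq β] (x y : ι → β) :
    hammingNorm (x + y) ≤ hammingNorm x + hammingNorm y := by
  have h := hammingDist_triangle (-x) 0 y
  rwa [hammingDist_eq_hammingNorm, neg_neg, hammingDist_zero_right, hammingDist_zero_left,
    show hammingNorm (-x) = hammingNorm x from
      hammingNorm_comp (fun _ => Neg.neg) (fun _ => neg_injective) (fun _ => neg_zero)] at h

lemma hammingNorm_le_add_hammingNorm_add (x z : ι → ZMod 2) :
    hammingNorm z ≤ hammingNorm x + hammingNorm (x + z) := by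
  simpa [← add_assoc, ZModModule.add_self] using hammingNorm_add_le x (x + z)

lemma hammingNorm_eq_sum (x : ι → ZMod 2) :
    hammingNorm x = ∑ c, if x c ≠ 0 then 1 else 0 :=
  Finset.card_filter _ _

/-- The total weight of the four faces `W, W + x, W + y, W + x + y + E` of a word, written
relative to its face `W`; see `hammingNorm_eq_quadrantNorm`. -/
def quadrantNorm (W x y E : ι → ZMod 2) : ℕ :=
  hammingNorm W + hammingNorm (W + x) + hammingNorm (W + y) + hammingNorm (W + x + y + E)

lemma hammingNorm_add_le_quadrantNorm (W x y : ι → ZMod 2) :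
    hammingNorm x + hammingNorm y + hammingNorm (x + y) ≤ quadrantNorm W x y 0 := by
  simp only [quadrantNorm, add_zero, hammingNorm_eq_sum, ← Finset.sum_add_distrib]
  refine Finset.sum_le_sum fun c _ => ?_
  have key : ∀ a b d : ZMod 2,
      (if b ≠ 0 then 1 else 0) + (if d ≠ 0 then 1 else 0) + (if b + d ≠ 0 then 1 else 0) ≤
        (if a ≠ 0 then 1 else 0) + (if a + b ≠ 0 then 1 else 0) +
          (if a + d ≠ 0 then 1 else 0) + (if a + b + d ≠ 0 then 1 else 0) := by
    decide
  exact key (W c) (x c) (y c)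

lemma hammingNorm_le_quadrantNorm (W x y E : ι → ZMod 2) :
    hammingNorm E ≤ quadrantNorm W x y E := by
  simp only [quadrantNorm, hammingNorm_eq_sum, ← Finset.sum_add_distrib]
  refine Finset.sum_le_sum fun c _ => ?_
  have key : ∀ a b d e : ZMod 2,
      (if e ≠ 0 then 1 else 0) ≤
        (if a ≠ 0 then 1 else 0) + (if a + b ≠ 0 then 1 else 0) +
          (if a + d ≠ 0 then 1 else 0) + (if a + b + d + e ≠ 0 then 1 else 0) := by
    decide
  exact key (W c) (x c) (y c) (E c)

lemma two_pow_le_quadrantNorm_of_pair {ℓ : ℕ} {W x y E : ι → ZMod 2}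
    (hx : 2 ^ ℓ ≤ hammingNorm x) (hy : 2 ^ ℓ ≤ hammingNorm y)
    (hxy : 2 ^ (ℓ + 1) ≤ hammingNorm (x + y) + 2)
    (hE : E ≠ 0 → 2 ^ (ℓ + 2) ≤ hammingNorm E) :
    2 ^ (ℓ + 2) ≤ quadrantNorm W x y E + 2 := by
  by_cases hE0 : E = 0
  · have := hammingNorm_add_le_quadrantNorm W x y
    rw [hE0]
    rw [pow_succ] at hxy ⊢
    omega
  · have := hammingNorm_le_quadrantNorm W x y E
    have := hE hE0
    omega

lemma two_pow_le_quadrantNorm_of_triple {ℓ : ℕ} {W x y E : ι → ZMod 2} (hW : W ≠ 0)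
    (hWx : W + x ≠ 0) (hWy : W + y ≠ 0) (hxy : x + y ≠ 0 → 2 ^ ℓ ≤ hammingNorm (x + y))
    (hxyE : x + y + E ≠ 0 → 2 ^ ℓ ≤ hammingNorm (x + y + E))
    (hE : 2 ^ (ℓ + 1) ≤ hammingNorm E + 2) :
    2 ^ (ℓ + 1) ≤ quadrantNorm W x y E := by
  have h₁ : hammingNorm (x + y + E) ≤ hammingNorm W + hammingNorm (W + x + y + E) := by
    simpa only [add_assoc] using hammingNorm_le_add_hammingNorm_add W (x + y + E)
  have h₂ := hammingNorm_le_add_hammingNorm_add (W + x) (x + y)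
  rw [ZModModule.add_add_add_cancel] at h₂
  have := hammingNorm_pos_iff.2 hW
  have := hammingNorm_pos_iff.2 hWx
  have := hammingNorm_pos_iff.2 hWy
  unfold quadrantNorm
  by_cases hxy0 : x + y = 0
  · rw [hxy0, zero_add] at h₁
    omega
  by_cases hxyE0 : x + y + E = 0
  · have hE' : E = x + y := by
      rw [← ZModModule.neg_eq_self (x + y)]
      exact eq_neg_of_add_eq_zero_right hxyE0
    have hW' : W + x + y + E = W := by
      rw [add_assoc W, add_assoc W, hxyE0, add_zero]
    rw [hW'] at h₁ ⊢
    rw [← hE'] at h₂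
    omega
  have := hxy hxy0
  have := hxyE hxyE0
  rw [pow_succ]
  omega

end Hamming

section Cube

variable {n : ℕ}

instance (c t : Fin n → Bool) : Decidable (c ≤ t) :=
  inferInstanceAs (Decidable (∀ a, c a ≤ t a))

/-- Row `t` of the polar matrix on the Boolean cube (see `row_apply`). -/
def cubeRow (t : Fin n → Bool) : (Fin n → Bool) → ZMod 2 := fun c => if c ≤ t then 1 else 0

def bitCount (t : Fin n → Bool) : ℕ := ∑ a, (t a).toNat

/-- The Reed–Muller code `RM(n - p, n)`: `cubeRow t` is the monomial `∏_{t a = false} (1 + x_a)`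
of degree `n - bitCount t`. -/
def rmCode (n p : ℕ) : Submodule (ZMod 2) ((Fin n → Bool) → ZMod 2) :=
  Submodule.span (ZMod 2) (cubeRow '' {t | p ≤ bitCount t})

def facet (b : Fin (n + 1)) (e : Bool) :
    ((Fin (n + 1) → Bool) → ZMod 2) →ₗ[ZMod 2] ((Fin n → Bool) → ZMod 2) :=
  LinearMap.funLeft (ZMod 2) (ZMod 2) (b.insertNth (α := fun _ => Bool) e)

/-- With `facet b false f = u + v` and `facet b true f = u` as in the `(u | u + v)` construction,
`facetSum b f = v`. -/
def facetSum (b : Fin (n + 1)) :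
    ((Fin (n + 1) → Bool) → ZMod 2) →ₗ[ZMod 2] ((Fin n → Bool) → ZMod 2) :=
  facet b false + facet b true

lemma exists_eq_true_of_bitCount_pos {t : Fin n → Bool} (h : 0 < bitCount t) :
    ∃ a, t a = true := by
  by_contra! h'
  simp [bitCount, h'] at h

lemma bitCount_eq_removeNth (b : Fin (n + 1)) (t : Fin (n + 1) → Bool) :
    bitCount t = (t b).toNat + bitCount (b.removeNth t) :=
  Fin.sum_univ_succAbove _ b

lemma bitCount_removeNth_of_false {b : Fin (n + 1)} {t : Fin (n + 1) → Bool} (h : t b = false) :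
    bitCount (b.removeNth t) = bitCount t := by
  simp [bitCount_eq_removeNth b t, h]

lemma bitCount_removeNth_of_true {b : Fin (n + 1)} {t : Fin (n + 1) → Bool} (h : t b = true) :
    bitCount (b.removeNth t) + 1 = bitCount t := by
  simp [bitCount_eq_removeNth b t, h, add_comm]

lemma bitCount_update_of_eq_false {t : Fin n → Bool} {b : Fin n} (h : t b = false) :
    bitCount (Function.update t b true) = bitCount t + 1 := by
  simp only [bitCount]
  rw [← Finset.add_sum_erase _ _ (Finset.mem_univ b),
    ← Finset.add_sum_erase _ _ (Finset.mem_univ b),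
    Finset.sum_congr rfl fun a ha => by rw [Function.update_of_ne (Finset.ne_of_mem_erase ha)]]
  simp [h, add_comm]

lemma eq_false_of_disjoint {s t : Fin n → Bool} (h : Disjoint s t) {a : Fin n}
    (ha : s a = true) : t a = false := by
  simpa [ha, disjoint_iff] using Pi.disjoint_iff.1 h a

lemma disjoint_removeNth (b : Fin (n + 1)) {s t : Fin (n + 1) → Bool} (h : Disjoint s t) :
    Disjoint (b.removeNth s) (b.removeNth t) :=
  Pi.disjoint_iff.2 fun a => Pi.disjoint_iff.1 h (b.succAbove a)

lemma cubeRow_apply_eq_ite (b : Fin (n + 1)) (s c : Fin (n + 1) → Bool) :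
    cubeRow s c = if c b ≤ s b then cubeRow (b.removeNth s) (b.removeNth c) else 0 := by
  conv_lhs => rw [← Fin.insertNth_self_removeNth b c]
  simp only [cubeRow, Fin.insertNth_le_iff, ite_and]
  rfl

@[simp]
lemma facet_apply (b : Fin (n + 1)) (e : Bool) (f : (Fin (n + 1) → Bool) → ZMod 2)
    (c : Fin n → Bool) : facet b e f c = f (b.insertNth e c) :=
  rfl

lemma facet_false_cubeRow (b : Fin (n + 1)) (t : Fin (n + 1) → Bool) :
    facet b false (cubeRow t) = cubeRow (b.removeNth t) := by
  ext c
  simp [cubeRow, Fin.insertNth_le_iff]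
  rfl

lemma facet_true_cubeRow (b : Fin (n + 1)) (t : Fin (n + 1) → Bool) :
    facet b true (cubeRow t) = if t b then cubeRow (b.removeNth t) else 0 := by
  ext c
  by_cases h : t b <;> simp [cubeRow, Fin.insertNth_le_iff, h]
  rfl

lemma facetSum_cubeRow (b : Fin (n + 1)) (t : Fin (n + 1) → Bool) :
    facetSum b (cubeRow t) = if t b then 0 else cubeRow (b.removeNth t) := by
  by_cases h : t b <;>
    simp [facetSum, facet_false_cubeRow, facet_true_cubeRow, h, ZModModule.add_self]

lemma facet_false_eq_facetSum_add (b : Fin (n + 1)) (f : (Fin (n + 1) → Bool) → ZMod 2) :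
    facet b false f = facetSum b f + facet b true f := by
  simp [facetSum, add_assoc, ZModModule.add_self]

lemma hammingNorm_eq_facet_add_facet (b : Fin (n + 1)) (f : (Fin (n + 1) → Bool) → ZMod 2) :
    hammingNorm f = hammingNorm (facet b false f) + hammingNorm (facet b true f) := by
  simp only [hammingNorm_eq_sum, ← (Fin.insertNthEquiv (fun _ => Bool) b).sum_comp,
    Fintype.sum_prod_type, Fintype.sum_bool, add_comm, facet_apply]
  rfl

lemma hammingNorm_eq_quadrantNorm {m : ℕ} (b' : Fin (m + 2)) (b₂ : Fin (m + 1))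
    (f : (Fin (m + 2) → Bool) → ZMod 2) :
    hammingNorm f =
      quadrantNorm (facet b₂ true (facet b' true f)) (facet b₂ true (facetSum b' f))
        (facetSum b₂ (facet b' true f)) (facetSum b₂ (facetSum b' f)) := by
  rw [hammingNorm_eq_facet_add_facet b', hammingNorm_eq_facet_add_facet b₂,
    hammingNorm_eq_facet_add_facet b₂ (facet b' true f), facet_false_eq_facetSum_add b',
    facet_false_eq_facetSum_add b₂, facet_false_eq_facetSum_add b₂ (facet b' true f)]
  simp only [quadrantNorm, map_add]
  abel_nf

lemma hammingNorm_cubeRow : ∀ {n : ℕ} (t : Fin n → Bool),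
    hammingNorm (cubeRow t) = 2 ^ bitCount t
  | 0, t => by
    simp [hammingNorm_eq_sum, bitCount, cubeRow, Subsingleton.elim _ t]
  | n + 1, t => by
    rw [hammingNorm_eq_facet_add_facet 0, facet_false_cubeRow, facet_true_cubeRow,
      bitCount_eq_removeNth 0]
    cases t 0 <;> simp [hammingNorm_cubeRow, pow_add, two_mul]

lemma cubeRow_mem_rmCode {p : ℕ} {t : Fin n → Bool} (h : p ≤ bitCount t) :
    cubeRow t ∈ rmCode n p :=
  Submodule.subset_span ⟨t, h, rfl⟩

lemma rmCode_anti {p p' : ℕ} (h : p ≤ p') : rmCode n p' ≤ rmCode n p :=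
  Submodule.span_mono <| Set.image_mono fun _ ht => h.trans ht

lemma rmCode_zero_succ (p : ℕ) : rmCode 0 (p + 1) = ⊥ := by
  simp [rmCode, bitCount]

lemma facet_true_mem_rmCode (b : Fin (n + 1)) {p : ℕ} {f : (Fin (n + 1) → Bool) → ZMod 2}
    (hf : f ∈ rmCode (n + 1) (p + 1)) : facet b true f ∈ rmCode n p := by
  refine (Submodule.span_le (p := (rmCode n p).comap (facet b true))).2 ?_ hf
  rintro _ ⟨t, ht : p + 1 ≤ bitCount t, rfl⟩
  by_cases h : t b
  · simp only [SetLike.mem_coe, Submodule.mem_comap, facet_true_cubeRow, h, if_true]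
    exact cubeRow_mem_rmCode (by have := bitCount_removeNth_of_true h; omega)
  · simp [facet_true_cubeRow, h]

lemma facetSum_mem_rmCode (b : Fin (n + 1)) {p : ℕ} {f : (Fin (n + 1) → Bool) → ZMod 2}
    (hf : f ∈ rmCode (n + 1) p) : facetSum b f ∈ rmCode n p := by
  refine (Submodule.span_le (p := (rmCode n p).comap (facetSum b))).2 ?_ hf
  rintro _ ⟨t, ht : p ≤ bitCount t, rfl⟩
  by_cases h : t b
  · simp [facetSum_cubeRow, h]
  · simp only [SetLike.mem_coe, Submodule.mem_comap, facetSum_cubeRow, h]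
    exact cubeRow_mem_rmCode (by rw [bitCount_removeNth_of_false (Bool.eq_false_iff.2 h)]; exact ht)

theorem two_pow_le_hammingNorm_of_mem_rmCode :
    ∀ {n p : ℕ} {f : (Fin n → Bool) → ZMod 2},
      f ∈ rmCode n p → f ≠ 0 → 2 ^ p ≤ hammingNorm f
  | _, 0, _, _, hf0 => hammingNorm_pos_iff.2 hf0
  | 0, p + 1, f, hf, hf0 => by simp [rmCode_zero_succ, hf0] at hf
  | n + 1, p + 1, f, hf, hf0 => by
    have hu := facet_true_mem_rmCode 0 hf
    have hv := facetSum_mem_rmCode 0 hf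
    rw [hammingNorm_eq_facet_add_facet 0, facet_false_eq_facetSum_add]
    by_cases hv0 : facetSum 0 f = 0
    · rw [hv0, zero_add]
      have hu0 : facet 0 true f ≠ 0 := by
        intro hu0
        apply hf0
        rw [← hammingNorm_eq_zero, hammingNorm_eq_facet_add_facet 0, facet_false_eq_facetSum_add,
          hv0, hu0]
        simp
      have := two_pow_le_hammingNorm_of_mem_rmCode hu hu0
      rw [pow_succ]
      omega
    · have := two_pow_le_hammingNorm_of_mem_rmCode hv hv0
      have := hammingNorm_le_add_hammingNorm_add (facet 0 true f) (facetSum 0 f)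
      rw [add_comm (facet 0 true f)] at this
      omega

lemma cubeRow_notMem_rmCode : ∀ {n : ℕ} (s : Fin n → Bool),
    cubeRow s ∉ rmCode n (bitCount s + 1)
  | 0, s => by
    rw [rmCode_zero_succ, Submodule.mem_bot]
    intro h
    simpa [cubeRow] using congrFun h s
  | n + 1, s => by
    intro hs
    have hcount := bitCount_eq_removeNth 0 s
    by_cases h : s 0
    · rw [h, Bool.toNat_true] at hcount
      have hs' := facet_true_mem_rmCode 0 (p := bitCount (Fin.removeNth 0 s) + 1)
        (rmCode_anti (by omega) hs)
      rw [facet_true_cubeRow, if_pos h] at hs'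
      exact cubeRow_notMem_rmCode _ hs'
    · rw [Bool.eq_false_iff.2 h, Bool.toNat_false] at hcount
      have hs' := facetSum_mem_rmCode 0 (p := bitCount (Fin.removeNth 0 s) + 1)
        (rmCode_anti (by omega) hs)
      rw [facetSum_cubeRow, if_neg h] at hs'
      exact cubeRow_notMem_rmCode _ hs'

lemma cubeRow_add_ne_zero {s : Fin n → Bool} {q : (Fin n → Bool) → ZMod 2}
    (hq : q ∈ rmCode n (bitCount s + 1)) : cubeRow s + q ≠ 0 := fun h =>
  cubeRow_notMem_rmCode s (eq_neg_of_add_eq_zero_left h ▸ neg_mem hq)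

lemma two_pow_le_hammingNorm_cubeRow_add {s : Fin n → Bool} {q : (Fin n → Bool) → ZMod 2}
    (hq : q ∈ rmCode n (bitCount s + 1)) : 2 ^ bitCount s ≤ hammingNorm (cubeRow s + q) :=
  two_pow_le_hammingNorm_of_mem_rmCode
    (add_mem (cubeRow_mem_rmCode le_rfl) (rmCode_anti (Nat.le_succ _) hq))
    (cubeRow_add_ne_zero hq)

/-- On the faces along a bit `b'` of `j` and a bit `b₂` of `i`, the rows `g_i` and `g_j` survive,
with one bit fewer, only in `x` and in `y`, and `E` is a Reed–Muller word. -/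
theorem two_pow_succ_le_hammingNorm_pair_add :
    ∀ (ℓ : ℕ) {n : ℕ} {i j : Fin n → Bool} {q : (Fin n → Bool) → ZMod 2},
      bitCount i = ℓ → bitCount j = ℓ → Disjoint i j → q ∈ rmCode n (ℓ + 1) →
      2 ^ (ℓ + 1) ≤ hammingNorm (cubeRow i + cubeRow j + q) + 2
  | 0, _, _, _, _, _, _, _, _ => by simp
  | ℓ + 1, n, i, j, q, hi, hj, hij, hq => by
    obtain ⟨b', hjb'⟩ := exists_eq_true_of_bitCount_pos (t := j) (by omega)
    rcases n with _ | n
    · exact b'.elim0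
    have hib' := eq_false_of_disjoint hij.symm hjb'
    obtain ⟨b₂, hib⟩ := exists_eq_true_of_bitCount_pos (t := b'.removeNth i)
      (by rw [bitCount_removeNth_of_false hib']; omega)
    rcases n with _ | m
    · exact b₂.elim0
    have hjb := eq_false_of_disjoint (disjoint_removeNth b' hij) hib
    have hi₂ : bitCount (b₂.removeNth (b'.removeNth i)) = ℓ := by
      have := bitCount_removeNth_of_true hib
      have := bitCount_removeNth_of_false hib'
      omega
    have hj₂ : bitCount (b₂.removeNth (b'.removeNth j)) = ℓ := by
      have := bitCount_removeNth_of_false hjb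
      have := bitCount_removeNth_of_true hjb'
      omega
    have hRD := facet_true_mem_rmCode b₂ (facetSum_mem_rmCode b' hq)
    have hDR := facetSum_mem_rmCode b₂ (facet_true_mem_rmCode b' hq)
    rw [hammingNorm_eq_quadrantNorm b' b₂]
    refine two_pow_le_quadrantNorm_of_pair (ℓ := ℓ) ?_ ?_ ?_ ?_ <;>
      simp only [map_add, facetSum_cubeRow, facet_true_cubeRow, hib', hjb', hib, hjb, if_true,
        if_false, Bool.false_eq_true, zero_add, add_zero]
    · rw [← hi₂]
      exact two_pow_le_hammingNorm_cubeRow_add (by rw [hi₂]; exact hRD)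
    · rw [← hj₂]
      exact two_pow_le_hammingNorm_cubeRow_add (by rw [hj₂]; exact hDR)
    · rw [add_add_add_comm]
      exact two_pow_succ_le_hammingNorm_pair_add ℓ hi₂ hj₂
        (disjoint_removeNth b₂ (disjoint_removeNth b' hij)) (add_mem hRD hDR)
    · exact two_pow_le_hammingNorm_of_mem_rmCode
        (facetSum_mem_rmCode b₂ (facetSum_mem_rmCode b' hq))

/-- On the faces along the two bits `b'`, `b₂` of `k`, the row `g_k` contributes the indicator of
a point to `W` only, and `g_i + g_j` survives only in `E`. -/
theorem two_pow_succ_le_hammingNorm_triple_add {ℓ n : ℕ} (hℓ : 2 ≤ ℓ)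
    {i j k : Fin n → Bool} {q : (Fin n → Bool) → ZMod 2}
    (hi : bitCount i = ℓ) (hj : bitCount j = ℓ) (hk : bitCount k = 2)
    (hij : Disjoint i j) (hik : Disjoint i k) (hjk : Disjoint j k) (hq : q ∈ rmCode n (ℓ + 1)) :
    2 ^ (ℓ + 1) ≤ hammingNorm (cubeRow i + cubeRow j + cubeRow k + q) := by
  obtain ⟨l, rfl⟩ : ∃ l, ℓ = l + 2 := ⟨ℓ - 2, by omega⟩
  obtain ⟨b', hkb'⟩ := exists_eq_true_of_bitCount_pos (t := k) (by omega)
  rcases n with _ | n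
  · exact b'.elim0
  obtain ⟨b₂, hkb⟩ := exists_eq_true_of_bitCount_pos (t := b'.removeNth k)
    (by have := bitCount_removeNth_of_true hkb'; omega)
  rcases n with _ | m
  · exact b₂.elim0
  have hib' := eq_false_of_disjoint hik.symm hkb'
  have hjb' := eq_false_of_disjoint hjk.symm hkb'
  have hib := eq_false_of_disjoint (disjoint_removeNth b' hik).symm hkb
  have hjb := eq_false_of_disjoint (disjoint_removeNth b' hjk).symm hkb
  have hi₂ : bitCount (b₂.removeNth (b'.removeNth i)) = l + 2 := by
    rw [bitCount_removeNth_of_false hib, bitCount_removeNth_of_false hib', hi]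
  have hj₂ : bitCount (b₂.removeNth (b'.removeNth j)) = l + 2 := by
    rw [bitCount_removeNth_of_false hjb, bitCount_removeNth_of_false hjb', hj]
  have hk₂ : bitCount (b₂.removeNth (b'.removeNth k)) = 0 := by
    have := bitCount_removeNth_of_true hkb
    have := bitCount_removeNth_of_true hkb'
    omega
  have hRR := facet_true_mem_rmCode b₂ (facet_true_mem_rmCode b' hq)
  have hRD := facet_true_mem_rmCode b₂ (facetSum_mem_rmCode b' hq)
  have hDR := facetSum_mem_rmCode b₂ (facet_true_mem_rmCode b' hq)
  have hDD := facetSum_mem_rmCode b₂ (facetSum_mem_rmCode b' hq)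
  rw [hammingNorm_eq_quadrantNorm b' b₂]
  refine two_pow_le_quadrantNorm_of_triple (ℓ := l + 2) ?_ ?_ ?_ ?_ ?_ ?_ <;>
    simp only [map_add, facetSum_cubeRow, facet_true_cubeRow, hib', hjb', hkb', hib, hjb, hkb,
      if_true, if_false, Bool.false_eq_true, zero_add, add_zero]
  · exact cubeRow_add_ne_zero (by rw [hk₂]; exact rmCode_anti (by omega) hRR)
  · rw [add_assoc]
    exact cubeRow_add_ne_zero (by
      rw [hk₂]; exact add_mem (rmCode_anti (by omega) hRR) (rmCode_anti (by omega) hRD))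
  · rw [add_assoc]
    exact cubeRow_add_ne_zero (by
      rw [hk₂]; exact add_mem (rmCode_anti (by omega) hRR) (rmCode_anti (by omega) hDR))
  · exact two_pow_le_hammingNorm_of_mem_rmCode (add_mem hRD hDR)
  · refine two_pow_le_hammingNorm_of_mem_rmCode (add_mem (add_mem hRD hDR) ?_)
    exact add_mem (add_mem (cubeRow_mem_rmCode hi₂.ge) (cubeRow_mem_rmCode hj₂.ge))
      (rmCode_anti (by omega) hDD)
  · exact two_pow_succ_le_hammingNorm_pair_add (l + 2) hi₂ hj₂
      (disjoint_removeNth b₂ (disjoint_removeNth b' hij)) hDD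

theorem min_distance_extended_rmCode {ℓ : ℕ} (hℓ : 2 ≤ ℓ) {i j k : Fin n → Bool}
    (hi : bitCount i = ℓ) (hj : bitCount j = ℓ) (hk : bitCount k = 2) (hij : Disjoint i j)
    (hik : Disjoint i k) (hjk : Disjoint j k) :
    (∀ v ∈ Submodule.span (ZMod 2)
        (cubeRow '' {t | ℓ + 1 ≤ bitCount t} ∪ {cubeRow i + cubeRow j + cubeRow k}),
      v ≠ 0 → 2 ^ (ℓ + 1) ≤ hammingNorm v) ∧
    (∃ v ∈ Submodule.span (ZMod 2)
        (cubeRow '' {t | ℓ + 1 ≤ bitCount t} ∪ {cubeRow i + cubeRow j + cubeRow k}),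
      hammingNorm v = 2 ^ (ℓ + 1)) := by
  refine ⟨fun v hv hv0 => ?_, ?_⟩
  · rw [Set.union_singleton, Submodule.mem_span_insert] at hv
    obtain ⟨a, q, hq, rfl⟩ := hv
    obtain rfl | rfl : a = 0 ∨ a = 1 := by clear hv0; revert a; decide
    · rw [zero_smul, zero_add] at hv0 ⊢
      exact two_pow_le_hammingNorm_of_mem_rmCode hq hv0
    · rw [one_smul]
      exact two_pow_succ_le_hammingNorm_triple_add hℓ hi hj hk hij hik hjk hq
  · obtain ⟨b, hkb⟩ := exists_eq_true_of_bitCount_pos (t := k) (by omega)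
    have hcount := bitCount_update_of_eq_false (eq_false_of_disjoint hik.symm hkb)
    refine ⟨cubeRow (Function.update i b true),
      Submodule.subset_span (Or.inl ⟨_, ?_, rfl⟩), ?_⟩
    · show ℓ + 1 ≤ _
      rw [hcount, hi]
    · rw [hammingNorm_cubeRow, hcount, hi]

end Cube

section Bits

def bits (n : ℕ) (t : Fin (2 ^ n)) : Fin n → Bool := fun a => (t : ℕ).testBit a

lemma bits_injective (n : ℕ) : Function.Injective (bits n) := by
  intro t s h
  refine Fin.ext (Nat.eq_of_testBit_eq fun a => ?_)
  by_cases ha : a < n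
  · exact congrFun h ⟨a, ha⟩
  · have hle : 2 ^ n ≤ 2 ^ a := Nat.pow_le_pow_right two_pos (not_lt.1 ha)
    rw [Nat.testBit_eq_false_of_lt (t.isLt.trans_le hle),
      Nat.testBit_eq_false_of_lt (s.isLt.trans_le hle)]

noncomputable def bitsEquiv (n : ℕ) : Fin (2 ^ n) ≃ (Fin n → Bool) :=
  Equiv.ofBijective (bits n)
    ((Fintype.bijective_iff_injective_and_card _).2 ⟨bits_injective n, by simp⟩)

lemma popcount_eq_testBit_zero_add (x : ℕ) :
    popcount x = (x.testBit 0).toNat + popcount (x / 2) := by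
  rcases Nat.even_or_odd' x with ⟨q, rfl | rfl⟩
  · rcases eq_or_ne q 0 with rfl | hq
    · simp [popcount]
    · simp [popcount, Nat.bit0_bits _ hq]
  · rw [show (2 * q + 1) / 2 = q by omega, popcount, popcount, Nat.bit1_bits]
    simp [add_comm]

lemma popcount_eq_sum_testBit : ∀ {n x : ℕ}, x < 2 ^ n →
    popcount x = ∑ a : Fin n, (x.testBit a).toNat
  | 0, x, h => by
    obtain rfl : x = 0 := by simpa using h
    simp [popcount]
  | n + 1, x, h => by
    rw [popcount_eq_testBit_zero_add, popcount_eq_sum_testBit (n := n) (by omega),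
      Fin.sum_univ_succ]
    simp [Nat.testBit_div_two]

lemma popcount_eq_bitCount {n : ℕ} (t : Fin (2 ^ n)) : popcount t = bitCount (bitsEquiv n t) :=
  popcount_eq_sum_testBit t.isLt

lemma disjoint_bitsEquiv {n : ℕ} {t s : Fin (2 ^ n)} (h : (t : ℕ) &&& (s : ℕ) = 0) :
    Disjoint (bitsEquiv n t) (bitsEquiv n s) := by
  refine Pi.disjoint_iff.2 fun a => ?_
  have := congrArg (Nat.testBit · a) h
  simp only [Nat.testBit_land, Nat.zero_testBit] at this
  rw [disjoint_iff]
  exact this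

lemma polarKernel_apply (a b : Fin 2) : polarKernel a b = if b ≤ a then 1 else 0 := by
  fin_cases a <;> fin_cases b <;> rfl

/-- `polarG (n + 1)` is `polarKernel ⊗ polarG n`, whose first factor reads the top bit `n`. -/
lemma row_apply : ∀ (n : ℕ) (t c : Fin (2 ^ n)), row n t c = cubeRow (bits n t) (bits n c)
  | 0, t, c => by
    obtain rfl : t = c := Fin.ext (by have := t.isLt; have := c.isLt; simp at *)
    simp [row, polarG, cubeRow]
  | n + 1, t, c => by
    change polarKernel _ _ * row n _ _ = _
    rw [row_apply n, cubeRow_apply_eq_ite (Fin.last n), polarKernel_apply]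
    have hlow (x : Fin (2 ^ (n + 1))) :
        bits n ((finProdFinEquiv (m := 2)).symm ((finCongr (by ring)).symm x)).2
          = (Fin.last n).removeNth (bits (n + 1) x) := by
      ext a
      simp [bits, Fin.removeNth, Nat.testBit_mod_two_pow]
    have htop (x : Fin (2 ^ (n + 1))) :
        ((finProdFinEquiv (n := 2 ^ n)).symm ((finCongr (by ring)).symm x)).1
          = if bits (n + 1) x (Fin.last n) then (1 : Fin 2) else 0 := by
      have hx : (x : ℕ) / 2 ^ n < 2 := Nat.div_lt_of_lt_mul (by rw [← pow_succ]; exact x.isLt)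
      have : bits (n + 1) x (Fin.last n) = ((x : ℕ) / 2 ^ n).testBit 0 := by
        rw [Nat.testBit_div_two_pow, zero_add]; rfl
      ext
      rw [this, Nat.testBit_zero]
      interval_cases h : (x : ℕ) / 2 ^ n <;> simp [h]
    rw [hlow, hlow, htop, htop]
    cases bits (n + 1) c (Fin.last n) <;> cases bits (n + 1) t (Fin.last n) <;> simp

lemma hammingWeight_funLeft_bitsEquiv {n : ℕ} (v : (Fin n → Bool) → ZMod 2) :
    hammingWeight (LinearMap.funLeft (ZMod 2) (ZMod 2) (bitsEquiv n) v) = hammingNorm v := by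
  rw [hammingWeight, Finset.card_filter, hammingNorm_eq_sum]
  exact (bitsEquiv n).sum_comp fun s => if v s ≠ 0 then 1 else 0

lemma row_eq_funLeft {n : ℕ} (t : Fin (2 ^ n)) :
    row n t = LinearMap.funLeft (ZMod 2) (ZMod 2) (bitsEquiv n) (cubeRow (bitsEquiv n t)) :=
  funext (row_apply n t)

lemma rows_union_eq_image_funLeft (n ℓ : ℕ) (i j k : Fin (2 ^ n)) :
    {v | ∃ t : Fin (2 ^ n), ℓ + 1 ≤ popcount (t : ℕ) ∧ v = row n t} ∪
        {row n i + row n j + row n k} =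
      LinearMap.funLeft (ZMod 2) (ZMod 2) (bitsEquiv n) ''
        (cubeRow '' {t | ℓ + 1 ≤ bitCount t} ∪
          {cubeRow (bitsEquiv n i) + cubeRow (bitsEquiv n j) + cubeRow (bitsEquiv n k)}) := by
  rw [Set.image_union, Set.image_singleton, Set.image_image]
  simp only [map_add, ← row_eq_funLeft]
  congr 1
  ext v
  simp only [Set.mem_image, popcount_eq_bitCount]
  constructor
  · rintro ⟨t, ht, rfl⟩
    exact ⟨_, ht, (row_eq_funLeft t).symm⟩
  · rintro ⟨s, hs, rfl⟩
    exact ⟨(bitsEquiv n).symm s, by simpa using hs, by simp [row_eq_funLeft]⟩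

end Bits

/-- the polar-like code spanned by the rows of popcount at least `ℓ+1`
together with the merged row `g_i + g_j + g_k` (disjoint-support triple) has minimum
Hamming weight exactly `2^(ℓ+1)`. -/
theorem min_distance_extended_code_disjoint_triple (n ℓ : ℕ) (hℓ : 2 ≤ ℓ)
    (i j k : Fin (2 ^ n))
    (hi : popcount (i : ℕ) = ℓ) (hj : popcount (j : ℕ) = ℓ) (hk : popcount (k : ℕ) = 2)
    (hij : (i : ℕ) &&& (j : ℕ) = 0) (hik : (i : ℕ) &&& (k : ℕ) = 0)
    (hjk : (j : ℕ) &&& (k : ℕ) = 0) :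
    (∀ c ∈ Submodule.span (ZMod 2)
        ({v | ∃ t : Fin (2 ^ n), ℓ + 1 ≤ popcount (t : ℕ) ∧ v = row n t} ∪
          {row n i + row n j + row n k}),
      c ≠ 0 → 2 ^ (ℓ + 1) ≤ hammingWeight c) ∧
    (∃ c ∈ Submodule.span (ZMod 2)
        ({v | ∃ t : Fin (2 ^ n), ℓ + 1 ≤ popcount (t : ℕ) ∧ v = row n t} ∪
          {row n i + row n j + row n k}),
      hammingWeight c = 2 ^ (ℓ + 1)) := by
  rw [rows_union_eq_image_funLeft, Submodule.span_image]
  obtain ⟨hmin, v, hv, hwt⟩ := min_distance_extended_rmCode hℓ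
    ((popcount_eq_bitCount i).symm.trans hi) ((popcount_eq_bitCount j).symm.trans hj)
    ((popcount_eq_bitCount k).symm.trans hk)
    (disjoint_bitsEquiv hij) (disjoint_bitsEquiv hik) (disjoint_bitsEquiv hjk)
  refine ⟨?_, _, Submodule.mem_map_of_mem hv, by rw [hammingWeight_funLeft_bitsEquiv, hwt]⟩
  rintro _ ⟨v, hv, rfl⟩ hv0
  rw [hammingWeight_funLeft_bitsEquiv]
  exact hmin v hv (by rintro rfl; exact hv0 (map_zero _))
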